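/- Let a, c > 0, let g₁, g₂ : ℝ → ℝ be continuously differentiable with g₁'(x) > 0 and g₂'(y) > 0 for all x, y > 0, let f : ℝ² → ℝ be continuously differentiable with f(x, y) > 0 on the open positive quadrant, and let n_X, n_Y ∈ ℝ satisfy n_X·∂f/∂x (x, y) ≤ 0 and n_Y·∂f/∂y (x, y) ≤ 0 for all x, y > 0. Then the system ẋ = a − g₁(x) + n_X f(x, y), ẏ = c − g₂(y) + n_Y f(x, y) has no nonconstant periodic solution with values in the open positive quadrant: if T > 0 and x, y : ℝ → ℝ are differentiable, T-periodic, positive-valued, and satisfy the system for all t, then x and y are constant. -/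

import Mathlib

/-!
Along a periodic solution the velocity `(p, q) = (ẋ, ẏ)` solves the periodic linear system
`(p, q)' = J (p, q)` with `J = -diag(g₁'(x), g₂'(y)) + (nX, nY)ᵀ ∇f(x, y)`. The sign conditions give
`tr J < 0`, and unless `J` is triangular they give the off-diagonal entries `nX f_y`, `nY f_x` a
common sign `ε`. Then `r = ε p q` satisfies `r' ≥ (tr J) r`, so the periodic function `r` is
nonnegative (at a negative minimum `r' > 0`). Consequently `p' = J₁₁ p + J₁₂ q` with `J₁₂ q` of the
sign of `p`, so once `p > 0` it stays positive for a whole period (comparison with an exponential),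
and `x` would increase strictly over a period; symmetrically `p < 0` is impossible. Hence `p = q = 0`.
-/

open Set Function Real

theorem Function.Periodic.periodic_of_hasDerivAt {x p : ℝ → ℝ} {T : ℝ} (hx : Periodic x T)
    (hxp : ∀ t, HasDerivAt x (p t) t) : Periodic p T := fun t => by
  have h := (hxp (t + T)).comp_add_const t T
  rw [hx.funext] at h
  exact h.unique (hxp t)

theorem Function.Periodic.nonneg_of_hasDerivAt {u u' : ℝ → ℝ} {T : ℝ} (hu : Periodic u T)
    (hT : T ≠ 0) (hu' : ∀ t, HasDerivAt u (u' t) t) (hneg : ∀ t, u t < 0 → 0 < u' t) (t : ℝ) :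
    0 ≤ u t := by
  have hcont : Continuous u := continuous_iff_continuousAt.2 fun t => (hu' t).continuousAt
  obtain ⟨_, ⟨tmin, rfl⟩, hmin⟩ :=
    (hu.compact_of_continuous hT hcont).exists_isLeast (range_nonempty u)
  have hlocal : IsLocalMin u tmin := Filter.Eventually.of_forall fun s => hmin ⟨s, rfl⟩
  by_contra! ht
  exact (hneg tmin ((hmin ⟨t, rfl⟩).trans_lt ht)).ne' (hlocal.hasDerivAt_eq_zero (hu' tmin))

theorem pos_of_hasDerivAt_of_mul_le {u u' α : ℝ → ℝ} {s e : ℝ} (hα : ContinuousOn α (Icc s e))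
    (hu' : ∀ t, HasDerivAt u (u' t) t) (hbound : ∀ t ∈ Icc s e, 0 < u t → α t * u t ≤ u' t)
    (hs : 0 < u s) {t : ℝ} (ht : t ∈ Icc s e) : 0 < u t := by
  obtain ⟨m, hm⟩ := isCompact_Icc.bddBelow_image hα
  -- since `α ≥ m` on `[s, e]`, `u` cannot cross this barrier from above
  set barrier : ℝ → ℝ := fun t => u s * exp ((m - 1) * (t - s))
  have hbarrier : ∀ t, HasDerivAt barrier ((m - 1) * barrier t) t := fun t => by
    have := (((hasDerivAt_id t).sub_const s).const_mul (m - 1)).exp.const_mul (u s)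
    exact this.congr_deriv (by simp only [barrier, id]; ring)
  have hbarrier_pos : ∀ t, 0 < barrier t := fun t => mul_pos hs (exp_pos _)
  have hle := image_le_of_deriv_right_lt_deriv_boundary (f := fun t => -u t)
    (f' := fun t => -u' t) (B := fun t => -barrier t) (B' := fun t => -((m - 1) * barrier t))
    (fun t _ => (hu' t).neg.continuousAt.continuousWithinAt)
    (fun t _ => (hu' t).neg.hasDerivWithinAt) (by simp [barrier]) (fun t => (hbarrier t).neg)
    (fun t ht heq => by
      have hut : u t = barrier t := neg_inj.1 heq
      have hαt : m ≤ α t := hm ⟨t, Ico_subset_Icc_self ht, rfl⟩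
      have := hbound t (Ico_subset_Icc_self ht) (hut ▸ hbarrier_pos t)
      rw [hut] at this
      nlinarith [mul_le_mul_of_nonneg_right hαt (hbarrier_pos t).le, hbarrier_pos t]) ht
  linarith [hbarrier_pos t, show -u t ≤ -barrier t from hle]

theorem Function.Periodic.hasDerivAt_nonpos {X u u' α : ℝ → ℝ} {T : ℝ} (hX : Periodic X T)
    (hT : 0 < T) (hXu : ∀ t, HasDerivAt X (u t) t) (hu' : ∀ t, HasDerivAt u (u' t) t)
    (hα : Continuous α) (hbound : ∀ t, 0 < u t → α t * u t ≤ u' t) (t : ℝ) : u t ≤ 0 := by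
  by_contra! ht
  have hpos : ∀ s ∈ Icc t (t + T), 0 < u s := fun s hs =>
    pos_of_hasDerivAt_of_mul_le hα.continuousOn hu' (fun s _ => hbound s) ht hs
  have hmono : StrictMonoOn X (Icc t (t + T)) :=
    strictMonoOn_of_deriv_pos (convex_Icc _ _)
      (continuous_iff_continuousAt.2 fun s => (hXu s).continuousAt).continuousOn
      fun s hs => (hXu s).deriv ▸ hpos s (interior_subset hs)
  have := hmono (left_mem_Icc.2 (by linarith)) (right_mem_Icc.2 (by linarith)) (by linarith)
  exact this.ne (hX t).symm

theorem Function.Periodic.hasDerivAt_eq_zero {X u w α : ℝ → ℝ} {T : ℝ} (hX : Periodic X T)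
    (hT : 0 < T) (hXu : ∀ t, HasDerivAt X (u t) t)
    (hu' : ∀ t, HasDerivAt u (α t * u t + w t) t) (hα : Continuous α)
    (hw : ∀ t, 0 ≤ u t * w t) (t : ℝ) : u t = 0 := by
  have hle := hX.hasDerivAt_nonpos hT hXu hu' hα (fun s hs => by nlinarith [hw s]) t
  have hge := (hX.comp Neg.neg).hasDerivAt_nonpos (u := fun s => -u s) hT (fun s => (hXu s).neg)
    (fun s => (hu' s).neg) hα (fun s hs => by nlinarith [hw s]) t
  linarith

section PlanarLinearSystem

variable {T : ℝ} {x y p q A B C D : ℝ → ℝ}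

theorem eq_zero_of_periodic_of_lowerTriangular (hT : 0 < T) (hx : Periodic x T)
    (hy : Periodic y T) (hxp : ∀ t, HasDerivAt x (p t) t) (hyq : ∀ t, HasDerivAt y (q t) t)
    (hp : ∀ t, HasDerivAt p (A t * p t + B t * q t) t)
    (hq : ∀ t, HasDerivAt q (C t * p t + D t * q t) t) (hA : Continuous A) (hD : Continuous D)
    (hB : ∀ t, B t = 0) : p = 0 ∧ q = 0 := by
  have hp0 : p = 0 := funext <| hx.hasDerivAt_eq_zero hT hxp hp hA fun t => by simp [hB]
  have hq0 : q = 0 := funext <| hy.hasDerivAt_eq_zero hT hyq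
    (fun t => (hq t).congr_deriv (add_comm _ _)) hD fun t => by simp [hp0]
  exact ⟨hp0, hq0⟩

/-- With `ε = 1` the system is cooperative, with `ε = -1` competitive. -/
theorem eq_zero_of_periodic_of_offDiag_sign (hT : 0 < T) (hx : Periodic x T)
    (hy : Periodic y T) (hxp : ∀ t, HasDerivAt x (p t) t) (hyq : ∀ t, HasDerivAt y (q t) t)
    (hp : ∀ t, HasDerivAt p (A t * p t + B t * q t) t)
    (hq : ∀ t, HasDerivAt q (C t * p t + D t * q t) t) (hA : Continuous A) (hD : Continuous D)
    (htr : ∀ t, A t + D t < 0) {ε : ℝ} (hε : ε ≠ 0) (hB : ∀ t, 0 ≤ ε * B t)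
    (hC : ∀ t, 0 ≤ ε * C t) : p = 0 ∧ q = 0 := by
  -- `r = ε p q` satisfies `r' = (A + D) r + ε B q² + ε C p² ≥ (A + D) r`
  have hper : Periodic (fun t => ε * (p t * q t)) T :=
    ((hx.periodic_of_hasDerivAt hxp).mul (hy.periodic_of_hasDerivAt hyq)).comp (ε * ·)
  have hr : ∀ t, 0 ≤ ε * (p t * q t) := hper.nonneg_of_hasDerivAt hT.ne'
    (fun t => ((hp t).mul (hq t)).const_mul ε) fun t ht => by
      nlinarith [mul_nonneg (hB t) (sq_nonneg (q t)), mul_nonneg (hC t) (sq_nonneg (p t)),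
        mul_pos_of_neg_of_neg (htr t) ht]
  have hε2 : 0 < ε ^ 2 := sq_pos_of_ne_zero hε
  have hp0 : p = 0 := funext <| hx.hasDerivAt_eq_zero hT hxp hp hA fun t =>
    nonneg_of_mul_nonneg_right (by nlinarith [mul_nonneg (hB t) (hr t)]) hε2
  have hq0 : q = 0 := funext <| hy.hasDerivAt_eq_zero hT hyq
    (fun t => (hq t).congr_deriv (add_comm _ _)) hD fun t =>
    nonneg_of_mul_nonneg_right (by nlinarith [mul_nonneg (hC t) (hr t)]) hε2
  exact ⟨hp0, hq0⟩

/-- The linearisation of a two-species network with one non-flow reaction: outflow terms on the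
diagonal plus the rank-one matrix `(nX, nY)ᵀ (φ, ψ)` coming from the reaction rate. -/
theorem eq_zero_of_periodic_of_reactionJacobian (hT : 0 < T) (hx : Periodic x T)
    (hy : Periodic y T) (hxp : ∀ t, HasDerivAt x (p t) t) (hyq : ∀ t, HasDerivAt y (q t) t)
    {G₁ G₂ φ ψ : ℝ → ℝ} {nX nY : ℝ}
    (hp : ∀ t, HasDerivAt p ((-G₁ t + nX * φ t) * p t + nX * ψ t * q t) t)
    (hq : ∀ t, HasDerivAt q (nY * φ t * p t + (-G₂ t + nY * ψ t) * q t) t)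
    (hG₁ : Continuous G₁) (hG₂ : Continuous G₂) (hφ : Continuous φ) (hψ : Continuous ψ)
    (hG₁_pos : ∀ t, 0 < G₁ t) (hG₂_pos : ∀ t, 0 < G₂ t) (hφ_sign : ∀ t, nX * φ t ≤ 0)
    (hψ_sign : ∀ t, nY * ψ t ≤ 0) : p = 0 ∧ q = 0 := by
  have hA : Continuous fun t => -G₁ t + nX * φ t := by fun_prop
  have hD : Continuous fun t => -G₂ t + nY * ψ t := by fun_prop
  rcases eq_or_ne nX 0 with rfl | hnX
  · exact eq_zero_of_periodic_of_lowerTriangular hT hx hy hxp hyq hp hq hA hD fun t => zero_mul _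
  rcases eq_or_ne nY 0 with rfl | hnY
  · exact (eq_zero_of_periodic_of_lowerTriangular hT hy hx hyq hxp
      (fun t => (hq t).congr_deriv (add_comm _ _)) (fun t => (hp t).congr_deriv (add_comm _ _))
      hD hA fun t => zero_mul _).symm
  refine eq_zero_of_periodic_of_offDiag_sign hT hx hy hxp hyq hp hq hA hD
    (fun t => by linarith [hG₁_pos t, hG₂_pos t, hφ_sign t, hψ_sign t])
    (ε := -(nX * nY)) (neg_ne_zero.2 (mul_ne_zero hnX hnY)) (fun t => ?_) (fun t => ?_)
  · nlinarith [mul_nonneg (sq_nonneg nX) (neg_nonneg.2 (hψ_sign t))]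
  · nlinarith [mul_nonneg (sq_nonneg nY) (neg_nonneg.2 (hφ_sign t))]

end PlanarLinearSystem

theorem hasDerivAt_comp_prodMk {f : ℝ × ℝ → ℝ} {x y : ℝ → ℝ} {p q t : ℝ}
    (hf : DifferentiableAt ℝ f (x t, y t)) (hx : HasDerivAt x p t) (hy : HasDerivAt y q t) :
    HasDerivAt (fun s => f (x s, y s))
      (fderiv ℝ f (x t, y t) (1, 0) * p + fderiv ℝ f (x t, y t) (0, 1) * q) t := by
  have h := hf.hasFDerivAt.comp_hasDerivAt t (hx.prodMk hy)
  have hpq : ((p, q) : ℝ × ℝ) = p • ((1 : ℝ), (0 : ℝ)) + q • ((0 : ℝ), (1 : ℝ)) := by simp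
  rwa [hpq, map_add, map_smul, map_smul, smul_eq_mul, smul_eq_mul, mul_comm p, mul_comm q] at h

theorem stmt_7 (a c : ℝ)
    (g₁ g₂ : ℝ → ℝ) (hg₁ : ContDiff ℝ 1 g₁) (hg₂ : ContDiff ℝ 1 g₂)
    (hg₁' : ∀ x : ℝ, 0 < x → 0 < deriv g₁ x)
    (hg₂' : ∀ y : ℝ, 0 < y → 0 < deriv g₂ y)
    (f : ℝ × ℝ → ℝ) (hf : ContDiff ℝ 1 f)
    (nX nY : ℝ)
    (hnX : ∀ p : ℝ × ℝ, 0 < p.1 → 0 < p.2 → nX * fderiv ℝ f p (1, 0) ≤ 0)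
    (hnY : ∀ p : ℝ × ℝ, 0 < p.1 → 0 < p.2 → nY * fderiv ℝ f p (0, 1) ≤ 0)
    (T : ℝ) (hT : 0 < T) (x y : ℝ → ℝ)
    (hx : Differentiable ℝ x) (hy : Differentiable ℝ y)
    (hxper : Function.Periodic x T) (hyper : Function.Periodic y T)
    (hxpos : ∀ t : ℝ, 0 < x t) (hypos : ∀ t : ℝ, 0 < y t)
    (hxd : ∀ t : ℝ, deriv x t = a - g₁ (x t) + nX * f (x t, y t))
    (hyd : ∀ t : ℝ, deriv y t = c - g₂ (y t) + nY * f (x t, y t)) :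
    (∀ t : ℝ, x t = x 0) ∧ (∀ t : ℝ, y t = y 0) := by
  set fx : ℝ → ℝ := fun t => fderiv ℝ f (x t, y t) (1, 0)
  set fy : ℝ → ℝ := fun t => fderiv ℝ f (x t, y t) (0, 1)
  set p : ℝ → ℝ := fun t => a - g₁ (x t) + nX * f (x t, y t)
  set q : ℝ → ℝ := fun t => c - g₂ (y t) + nY * f (x t, y t)
  have hxp : ∀ t, HasDerivAt x (p t) t := fun t => (hx t).hasDerivAt.congr_deriv (hxd t)
  have hyq : ∀ t, HasDerivAt y (q t) t := fun t => (hy t).hasDerivAt.congr_deriv (hyd t)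
  have hfxy : ∀ t, HasDerivAt (fun s => f (x s, y s)) (fx t * p t + fy t * q t) t := fun t =>
    hasDerivAt_comp_prodMk (hf.differentiable one_ne_zero _) (hxp t) (hyq t)
  have hp : ∀ t, HasDerivAt p ((-deriv g₁ (x t) + nX * fx t) * p t + nX * fy t * q t) t :=
    fun t => (((hasDerivAt_const t a).sub ((hg₁.differentiable one_ne_zero _).hasDerivAt.comp t
      (hxp t))).add ((hfxy t).const_mul nX)).congr_deriv (by ring)
  have hq : ∀ t, HasDerivAt q (nY * fx t * p t + (-deriv g₂ (y t) + nY * fy t) * q t) t :=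
    fun t => (((hasDerivAt_const t c).sub ((hg₂.differentiable one_ne_zero _).hasDerivAt.comp t
      (hyq t))).add ((hfxy t).const_mul nY)).congr_deriv (by ring)
  have hfderiv : Continuous fun t => fderiv ℝ f (x t, y t) :=
    (hf.continuous_fderiv one_ne_zero).comp (hx.continuous.prodMk hy.continuous)
  obtain ⟨hp0, hq0⟩ := eq_zero_of_periodic_of_reactionJacobian hT hxper hyper hxp hyq hp hq
    ((hg₁.continuous_deriv le_rfl).comp hx.continuous)
    ((hg₂.continuous_deriv le_rfl).comp hy.continuous)
    (hfderiv.clm_apply continuous_const) (hfderiv.clm_apply continuous_const)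
    (fun t => hg₁' _ (hxpos t)) (fun t => hg₂' _ (hypos t))
    (fun t => hnX _ (hxpos t) (hypos t)) (fun t => hnY _ (hxpos t) (hypos t))
  exact ⟨fun t => is_const_of_deriv_eq_zero hx (fun s => (hxd s).trans (congrFun hp0 s)) t 0,
    fun t => is_const_of_deriv_eq_zero hy (fun s => (hyd s).trans (congrFun hq0 s)) t 0⟩
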